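/- Let (X,d) be a metric space satisfying the infrasup p-diamond inequality with constant C_D > 0 for some p ≥ 1, and let F = {s, t, x₁, x₂, ...} be a vertical ε-diamond in X with parameter θ > 0 and ε ∈ (0,1). Then inf_{i≠j∈ℕ} d(x_i, x_j) ≤ 6·C_D·θ·ε^{1/p}. -/
import Mathlib


open scoped ENNReal

/-- A metric space `(X,d)` satisfies the infrasup `p`-diamond inequality with constant
`C_D > 0` if for all `s, t ∈ X` and every sequence `(x_n)` in `X`:
`d(s,t)^p/2^p + (1/C_D^p)·inf_{i≠j} d(x_i,x_j)^p
  ≤ max { sup_i d(s,x_i)^p , sup_i d(t,x_i)^p }`. -/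
def InfrasupDiamond (X : Type*) [PseudoMetricSpace X] (p C_D : ℝ) : Prop :=
  ∀ (s t : X) (x : ℕ → X),
    edist s t ^ p / (2 : ℝ≥0∞) ^ p
      + (1 / ENNReal.ofReal C_D ^ p) * (⨅ (i : ℕ) (j : ℕ) (_ : i ≠ j), edist (x i) (x j) ^ p)
      ≤ max (⨆ i : ℕ, edist s (x i) ^ p) (⨆ i : ℕ, edist t (x i) ^ p)

/-- Convexity bound: `(1+ε)^p ≤ 1 + ε·(2^p - 1)` for `1 ≤ p`, `ε ∈ [0,1]`. -/
lemma one_add_rpow_le (p ε : ℝ) (hp : 1 ≤ p) (hε0 : 0 ≤ ε) (hε1 : ε ≤ 1) :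
    (1 + ε) ^ p ≤ 1 + ε * ((2 : ℝ) ^ p - 1) := by
  have hc := (convexOn_rpow hp).2 (show (1:ℝ) ∈ Set.Ici 0 by norm_num)
    (show (2:ℝ) ∈ Set.Ici 0 by norm_num) (show (0:ℝ) ≤ 1 - ε by linarith) hε0 (by ring)
  have h1 : (1 - ε) • (1 : ℝ) + ε • (2 : ℝ) = 1 + ε := by simp [smul_eq_mul]; ring
  rw [h1] at hc
  have h2 : (1 : ℝ) ^ p = 1 := Real.one_rpow p
  simp only [smul_eq_mul, h2] at hc
  linarith

/-- **Metric Inequality `ε`-diamond Lemma.**  If `(X,d)` satisfies the infrasup `p`-diamond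
inequality with constant `C_D > 0` for some `p ≥ 1`, and `{s, t, x₁, x₂, ...}` is a vertical
`ε`-diamond in `X` with parameter `θ > 0` and `ε ∈ (0,1)`, then
`inf_{i ≠ j} d(x_i, x_j) ≤ 6·C_D·θ·ε^{1/p}`. -/
theorem metric_eps_diamond_lemma (X : Type*) [MetricSpace X] (p C_D : ℝ) (hp : 1 ≤ p)
    (hCD : 0 < C_D) (hX : InfrasupDiamond X p C_D)
    (s t : X) (x : ℕ → X) (θ ε : ℝ) (hθ : 0 < θ) (hε : ε ∈ Set.Ioo (0 : ℝ) 1)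
    (hst : 2 * θ ≤ dist s t ∧ dist s t ≤ 2 * (1 + ε) * θ)
    (hsx : ∀ i : ℕ, θ ≤ dist s (x i) ∧ dist s (x i) ≤ (1 + ε) * θ)
    (hxt : ∀ i : ℕ, θ ≤ dist (x i) t ∧ dist (x i) t ≤ (1 + ε) * θ) :
    (⨅ q : {q : ℕ × ℕ // q.1 ≠ q.2}, dist (x q.1.1) (x q.1.2))
      ≤ 6 * C_D * θ * ε ^ (1 / p) := by
  obtain ⟨hε0, hε1⟩ := hε
  have hp0 : (0 : ℝ) < p := lt_of_lt_of_le one_pos hp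
  set R : ℝ := 6 * C_D * θ * ε ^ (1 / p) with hRdef
  have hR0 : 0 < R := by positivity
  set M : ℝ≥0∞ := ⨅ (i : ℕ) (j : ℕ) (_ : i ≠ j), edist (x i) (x j) with hMdef
  -- Step 1: key ENNReal bound M ≤ ofReal R
  have hCpow : ENNReal.ofReal C_D ^ p = ENNReal.ofReal (C_D ^ p) :=
    ENNReal.ofReal_rpow_of_nonneg hCD.le hp0.le
  have hC0 : ENNReal.ofReal C_D ^ p ≠ 0 := by
    rw [hCpow]; simp [ENNReal.ofReal_eq_zero, not_le, Real.rpow_pos_of_pos hCD]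
  have hCtop : ENNReal.ofReal C_D ^ p ≠ ⊤ := by rw [hCpow]; exact ENNReal.ofReal_ne_top
  have h1 := hX s t x
  -- RHS bound
  have hsup : max (⨆ i : ℕ, edist s (x i) ^ p) (⨆ i : ℕ, edist t (x i) ^ p)
      ≤ ENNReal.ofReal ((1 + ε) * θ) ^ p := by
    apply max_le <;> refine iSup_le fun i => ?_
    · rw [edist_dist]
      exact ENNReal.rpow_le_rpow (ENNReal.ofReal_le_ofReal (hsx i).2) hp0.le
    · rw [edist_dist, dist_comm]
      exact ENNReal.rpow_le_rpow (ENNReal.ofReal_le_ofReal (hxt i).2) hp0.le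
  -- LHS lower bound
  have hlow : ENNReal.ofReal θ ^ p ≤ edist s t ^ p / (2 : ℝ≥0∞) ^ p := by
    have h2θ : ENNReal.ofReal (2 * θ) ≤ edist s t := by
      rw [edist_dist]; exact ENNReal.ofReal_le_ofReal hst.1
    have : ENNReal.ofReal (2 * θ) ^ p = (2 : ℝ≥0∞) ^ p * ENNReal.ofReal θ ^ p := by
      rw [ENNReal.ofReal_mul (by norm_num), ENNReal.mul_rpow_of_nonneg _ _ hp0.le,
        ENNReal.ofReal_ofNat]
    rw [ENNReal.le_div_iff_mul_le (Or.inl (by simp [ENNReal.rpow_eq_zero_iff]))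
      (Or.inl (by simp [ENNReal.rpow_eq_top_iff]))]
    calc ENNReal.ofReal θ ^ p * (2 : ℝ≥0∞) ^ p = ENNReal.ofReal (2 * θ) ^ p := by
          rw [this, mul_comm]
      _ ≤ edist s t ^ p := ENNReal.rpow_le_rpow h2θ hp0.le
  have hMp : M ^ p ≤ ⨅ (i : ℕ) (j : ℕ) (_ : i ≠ j), edist (x i) (x j) ^ p := by
    refine le_iInf fun i => le_iInf fun j => le_iInf fun hij => ?_
    refine ENNReal.rpow_le_rpow ?_ hp0.le
    exact iInf_le_of_le i (iInf_le_of_le j (iInf_le_of_le hij le_rfl))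
  have h2 : ENNReal.ofReal θ ^ p + (1 / ENNReal.ofReal C_D ^ p) * M ^ p
      ≤ ENNReal.ofReal ((1 + ε) * θ) ^ p :=
    le_trans (add_le_add hlow (mul_le_mul_right hMp _)) (le_trans h1 hsup)
  have h3 : (1 / ENNReal.ofReal C_D ^ p) * M ^ p
      ≤ ENNReal.ofReal (((1 + ε) * θ) ^ p - θ ^ p) := by
    rw [ENNReal.ofReal_rpow_of_nonneg (x := (1 + ε) * θ) (by positivity) hp0.le,
      ENNReal.ofReal_rpow_of_nonneg hθ.le hp0.le] at h2
    rw [ENNReal.ofReal_sub _ (by positivity)]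
    exact ENNReal.le_sub_of_add_le_left ENNReal.ofReal_ne_top h2
  have h4 : M ^ p ≤ ENNReal.ofReal (C_D ^ p * (((1 + ε) * θ) ^ p - θ ^ p)) := by
    have : M ^ p = ENNReal.ofReal C_D ^ p * ((1 / ENNReal.ofReal C_D ^ p) * M ^ p) := by
      rw [one_div, ← mul_assoc, ENNReal.mul_inv_cancel hC0 hCtop, one_mul]
    calc M ^ p = ENNReal.ofReal C_D ^ p * ((1 / ENNReal.ofReal C_D ^ p) * M ^ p) := this
      _ ≤ ENNReal.ofReal C_D ^ p * ENNReal.ofReal (((1 + ε) * θ) ^ p - θ ^ p) :=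
          mul_le_mul_right h3 _
      _ = ENNReal.ofReal (C_D ^ p * (((1 + ε) * θ) ^ p - θ ^ p)) := by
          rw [hCpow, ← ENNReal.ofReal_mul (by positivity)]
  -- real arithmetic: C_D^p * (((1+ε)θ)^p - θ^p) ≤ R^p
  have hreal : C_D ^ p * (((1 + ε) * θ) ^ p - θ ^ p) ≤ R ^ p := by
    have hconv := one_add_rpow_le p ε hp hε0.le hε1.le
    have h2p : (2 : ℝ) ^ p - 1 ≤ (6 : ℝ) ^ p := by
      have := Real.rpow_le_rpow (by norm_num : (0:ℝ) ≤ 2) (by norm_num : (2:ℝ) ≤ 6) hp0.le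
      linarith
    have hmul : ((1 + ε) * θ) ^ p = (1 + ε) ^ p * θ ^ p :=
      Real.mul_rpow (by linarith) hθ.le
    have hRp : R ^ p = 6 ^ p * C_D ^ p * θ ^ p * ε := by
      rw [hRdef, Real.mul_rpow (by positivity) (by positivity),
        Real.mul_rpow (by positivity) (by positivity),
        Real.mul_rpow (by positivity) (by positivity),
        ← Real.rpow_mul hε0.le, one_div, inv_mul_cancel₀ hp0.ne', Real.rpow_one]
    have hθp : (0:ℝ) < θ ^ p := Real.rpow_pos_of_pos hθ p
    have hCp : (0:ℝ) < C_D ^ p := Real.rpow_pos_of_pos hCD p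
    rw [hmul, hRp]
    have key : (1 + ε) ^ p - 1 ≤ ε * (6:ℝ) ^ p := by
      have : ε * ((2:ℝ) ^ p - 1) ≤ ε * (6:ℝ) ^ p :=
        mul_le_mul_of_nonneg_left h2p hε0.le
      linarith
    calc C_D ^ p * ((1 + ε) ^ p * θ ^ p - θ ^ p)
        = C_D ^ p * θ ^ p * ((1 + ε) ^ p - 1) := by ring
      _ ≤ C_D ^ p * θ ^ p * (ε * (6:ℝ) ^ p) := by
          exact mul_le_mul_of_nonneg_left key (by positivity)
      _ = 6 ^ p * C_D ^ p * θ ^ p * ε := by ring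
  have h5 : M ^ p ≤ ENNReal.ofReal R ^ p := by
    rw [ENNReal.ofReal_rpow_of_nonneg hR0.le hp0.le]
    exact le_trans h4 (ENNReal.ofReal_le_ofReal hreal)
  have key : M ≤ ENNReal.ofReal R := (ENNReal.rpow_le_rpow_iff hp0).1 h5
  -- Step 2: transfer to the real infimum
  by_contra hcon
  push_neg at hcon
  obtain ⟨R', hRR', hR'⟩ := exists_between hcon
  have hbdd : BddBelow (Set.range fun q : {q : ℕ × ℕ // q.1 ≠ q.2} =>
      dist (x q.1.1) (x q.1.2)) := ⟨0, by rintro r ⟨q, rfl⟩; exact dist_nonneg⟩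
  have hall : ∀ i j : ℕ, i ≠ j → R' ≤ dist (x i) (x j) := fun i j hij =>
    le_trans hR'.le (ciInf_le hbdd ⟨(i, j), hij⟩)
  have : ENNReal.ofReal R' ≤ M := by
    refine le_iInf fun i => le_iInf fun j => le_iInf fun hij => ?_
    rw [edist_dist]
    exact ENNReal.ofReal_le_ofReal (hall i j hij)
  have : ENNReal.ofReal R' ≤ ENNReal.ofReal R := le_trans this key
  have : R' ≤ R := (ENNReal.ofReal_le_ofReal_iff hR0.le).1 this
  linarith
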